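/- arXiv:math/0509351 — 8 statements merged into one kernel-verified Lean document; each statement's English description precedes it below -/
import Mathlib

section
/- If G is a non-trivial OC-group, then |Z(G)| = 2 or G is nilpotent. -/
section OCAux

variable {G : Type} [Group G] [Finite G]

/-- Key contradiction lemma. -/
lemma oc_key (hOC : ∀ x y : G, x ∉ Subgroup.center G → y ∉ Subgroup.center G →
      orderOf x = orderOf y → IsConj x y)
    (x u v : G) (hx : x ∉ Subgroup.center G)
    (hu : u ∈ Subgroup.center G) (hv : v ∈ Subgroup.center G)
    (huv : orderOf u = orderOf v)
    (hcu : Nat.Coprime (orderOf x) (orderOf u))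
    (hcw : Nat.Coprime (orderOf x) (orderOf (v * u⁻¹)))
    (hne : v * u⁻¹ ≠ 1) : False := by
  have hxu : x * u ∉ Subgroup.center G := fun h => hx (by
    have := (Subgroup.center G).mul_mem h ((Subgroup.center G).inv_mem hu)
    simpa using this)
  have hxv : x * v ∉ Subgroup.center G := fun h => hx (by
    have := (Subgroup.center G).mul_mem h ((Subgroup.center G).inv_mem hv)
    simpa using this)
  have hcomu : Commute x u := Subgroup.mem_center_iff.mp hu x
  have hcomv : Commute x v := Subgroup.mem_center_iff.mp hv x
  have hcomw : Commute x (v * u⁻¹) := Subgroup.mem_center_iff.mp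
    ((Subgroup.center G).mul_mem hv ((Subgroup.center G).inv_mem hu)) x
  have hou : orderOf (x * u) = orderOf x * orderOf u :=
    hcomu.orderOf_mul_eq_mul_orderOf_of_coprime hcu
  have hov : orderOf (x * v) = orderOf x * orderOf v :=
    hcomv.orderOf_mul_eq_mul_orderOf_of_coprime (huv ▸ hcu)
  obtain ⟨c, hc⟩ := isConj_iff.mp (hOC (x * u) (x * v) hxu hxv (by rw [hou, hov, huv]))
  have hc' : c * x * c⁻¹ * u = x * v := by
    have hu' : c⁻¹ * u = u * c⁻¹ := Subgroup.mem_center_iff.mp hu c⁻¹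
    calc c * x * c⁻¹ * u = c * x * (c⁻¹ * u) := by group
      _ = c * x * (u * c⁻¹) := by rw [hu']
      _ = c * (x * u) * c⁻¹ := by group
      _ = x * v := hc
  have key : SemiconjBy c x (x * (v * u⁻¹)) := by
    show c * x = (x * (v * u⁻¹)) * c
    have : c * x * c⁻¹ = x * v * u⁻¹ := by
      rw [← hc']; group
    have h2 : c * x = x * v * u⁻¹ * c := by
      rw [← this]; group
    rw [h2]; group
  have horder : orderOf x = orderOf (x * (v * u⁻¹)) := key.orderOf_eq c
  have how : orderOf (x * (v * u⁻¹)) = orderOf x * orderOf (v * u⁻¹) :=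
    hcomw.orderOf_mul_eq_mul_orderOf_of_coprime hcw
  have hw1 : orderOf (v * u⁻¹) ≠ 1 := fun h => hne (orderOf_eq_one_iff.mp h)
  have hw2 : 2 ≤ orderOf (v * u⁻¹) := by
    have := orderOf_pos (v * u⁻¹)
    omega
  have hx0 : 0 < orderOf x := orderOf_pos x
  have hfin : orderOf x = orderOf x * orderOf (v * u⁻¹) := horder.trans how
  nlinarith

/-- If every element of order coprime to a prime `p` is central, then `G` is nilpotent. -/
lemma oc_nilp (p : ℕ) (hp : p.Prime)
    (KC : ∀ x : G, Nat.Coprime (orderOf x) p → x ∈ Subgroup.center G) :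
    Group.IsNilpotent G := by
  haveI : Fact p.Prime := ⟨hp⟩
  apply of_quotient_center_nilpotent
  have hpg : IsPGroup p (G ⧸ Subgroup.center G) := by
    intro q
    obtain ⟨g, rfl⟩ := QuotientGroup.mk_surjective q
    refine ⟨(orderOf g).factorization p, ?_⟩
    have h0 : orderOf g ≠ 0 := (orderOf_pos g).ne'
    have hd : p ^ (orderOf g).factorization p ∣ orderOf g := Nat.ordProj_dvd _ _
    have h1 : ((g ^ p ^ (orderOf g).factorization p : G) : G ⧸ Subgroup.center G) = 1 := by
      rw [QuotientGroup.eq_one_iff]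
      apply KC
      rw [orderOf_pow, Nat.gcd_eq_right hd]
      exact (Nat.coprime_ordCompl hp h0).symm
    simpa using h1
  exact hpg.isNilpotent

end OCAux

/-- **Lemma 2.1.** If `G` is a non-trivial OC-group, then `|Z(G)| = 2`
or `G` is nilpotent. -/
theorem nontrivial_oc_group_center_two_or_nilpotent (G : Type) [Group G] [Finite G]
    (hOC : ∀ x y : G, x ∉ Subgroup.center G → y ∉ Subgroup.center G →
      orderOf x = orderOf y → IsConj x y)
    (h1 : ⊥ < Subgroup.center G) (h2 : Subgroup.center G < ⊤) :
    Nat.card (Subgroup.center G) = 2 ∨ Group.IsNilpotent G := by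
  by_cases hcard : Nat.card (Subgroup.center G) = 2
  · exact Or.inl hcard
  right
  by_cases hA : ∃ z : G, z ∈ Subgroup.center G ∧ (orderOf z).Prime ∧ orderOf z ≠ 2
  · -- Case 1: the center has an element of odd prime order p
    obtain ⟨z, hz, hp, hp2⟩ := hA
    have hpodd : Odd (orderOf z) := hp.odd_of_ne_two hp2
    have hco2 : Nat.Coprime (orderOf z) 2 := by
      rwa [Nat.coprime_two_right]
    apply oc_nilp (orderOf z) hp
    intro x hco
    by_contra hx
    have hz2 : orderOf (z ^ 2) = orderOf z := by
      rw [orderOf_pow, Nat.Coprime.gcd_eq_one hco2, Nat.div_one]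
    have hzz : z ^ 2 * z⁻¹ = z := by group
    refine oc_key hOC x z (z ^ 2) hx hz ((Subgroup.center G).pow_mem hz 2) hz2.symm hco ?_ ?_
    · rw [hzz]; exact hco
    · rw [hzz]
      intro h
      rw [h, orderOf_one] at hp
      exact hp.ne_one rfl
  by_cases hB : ∃ z : G, z ∈ Subgroup.center G ∧ orderOf z = 4
  · -- Case 2: the center has an element of order 4
    obtain ⟨z, hz, hz4⟩ := hB
    apply oc_nilp 2 Nat.prime_two
    intro x hco
    by_contra hx
    have hco4 : Nat.Coprime (orderOf x) 4 := by
      have h4 : (4 : ℕ) = 2 ^ 2 := rfl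
      rw [h4]
      exact hco.pow_right 2
    have hz2 : orderOf (z⁻¹ * z⁻¹) = 2 := by
      have e1 : z⁻¹ * z⁻¹ = (z ^ 2)⁻¹ := by group
      rw [e1, orderOf_inv, orderOf_pow, hz4]
      norm_num
    refine oc_key hOC x z z⁻¹ hx hz ((Subgroup.center G).inv_mem hz)
      (orderOf_inv z).symm ?_ ?_ ?_
    · rw [hz4]; exact hco4
    · rw [hz2]; exact hco
    · intro h
      rw [h, orderOf_one] at hz2
      exact absurd hz2 (by norm_num)
  · -- Case 3: every element of the center squares to 1, and |Z| ≥ 3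
    have hexp : ∀ z : G, z ∈ Subgroup.center G → z * z = 1 := by
      intro z hzc
      have h0 : orderOf z ≠ 0 := (orderOf_pos z).ne'
      have hfac : ∀ {d : ℕ}, d.Prime → d ∣ orderOf z → d = 2 := by
        intro d hd hdd
        by_contra hd2
        apply hA
        refine ⟨z ^ (orderOf z / d), (Subgroup.center G).pow_mem hzc _, ?_⟩
        have hod : orderOf (z ^ (orderOf z / d)) = d := by
          rw [orderOf_pow, Nat.gcd_eq_right (Nat.div_dvd_of_dvd hdd), Nat.div_div_self hdd h0]
        rw [hod]
        exact ⟨hd, hd2⟩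
      have hpow := Nat.eq_prime_pow_of_unique_prime_dvd h0 hfac
      have h4 : ¬ (4 ∣ orderOf z) := by
        intro h4d
        apply hB
        refine ⟨z ^ (orderOf z / 4), (Subgroup.center G).pow_mem hzc _, ?_⟩
        rw [orderOf_pow, Nat.gcd_eq_right (Nat.div_dvd_of_dvd h4d), Nat.div_div_self h4d h0]
      have hk : orderOf z ∣ 2 := by
        by_cases hk1 : (orderOf z).primeFactorsList.length ≤ 1
        · rw [hpow]
          calc (2:ℕ) ^ (orderOf z).primeFactorsList.length ∣ 2 ^ 1 := pow_dvd_pow 2 hk1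
            _ = 2 := by norm_num
        · exfalso
          apply h4
          rw [hpow]
          calc (4:ℕ) = 2 ^ 2 := by norm_num
            _ ∣ 2 ^ (orderOf z).primeFactorsList.length := pow_dvd_pow 2 (by omega)
      have := orderOf_dvd_iff_pow_eq_one.mp hk
      rw [pow_two] at this
      exact this
    -- |Z| ≥ 3, so we can find two distinct involutions in the center
    have hnt : Nontrivial ↥(Subgroup.center G) :=
      (Subgroup.nontrivial_iff_ne_bot _).mpr h1.ne'
    have hge2 : 2 ≤ Nat.card ↥(Subgroup.center G) :=
      Finite.one_lt_card_iff_nontrivial.mpr hnt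
    have hge3 : 3 ≤ Nat.card ↥(Subgroup.center G) := by omega
    classical
    haveI := Fintype.ofFinite ↥(Subgroup.center G)
    have hcard3 : 3 ≤ Fintype.card ↥(Subgroup.center G) := by
      rwa [← Nat.card_eq_fintype_card]
    obtain ⟨a, ha⟩ := exists_ne (1 : ↥(Subgroup.center G))
    have hb : ∃ b : ↥(Subgroup.center G), b ≠ 1 ∧ b ≠ a := by
      by_contra hcon
      push_neg at hcon
      have hsub : (Finset.univ : Finset ↥(Subgroup.center G)) ⊆ {1, a} := by
        intro b _
        simp only [Finset.mem_insert, Finset.mem_singleton]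
        rcases eq_or_ne b 1 with h | h
        · exact Or.inl h
        · exact Or.inr (hcon b h)
      have hle := Finset.card_le_card hsub
      have hle2 : ({1, a} : Finset ↥(Subgroup.center G)).card ≤ 2 := by
        apply le_trans (Finset.card_insert_le _ _)
        simp
      rw [Finset.card_univ] at hle
      omega
    obtain ⟨b, hb1, hba⟩ := hb
    have ha1 : (a : G) ≠ 1 := by
      simpa using ha
    have hb1' : (b : G) ≠ 1 := by
      simpa using hb1
    have haa : (a : G) * (a : G) = 1 := hexp a a.2
    have hbb : (b : G) * (b : G) = 1 := hexp b b.2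
    have hoa : orderOf (a : G) = 2 := orderOf_eq_prime (by rw [pow_two]; exact haa) ha1
    have hob : orderOf (b : G) = 2 := orderOf_eq_prime (by rw [pow_two]; exact hbb) hb1'
    have hainv : (a : G)⁻¹ = (a : G) := inv_eq_of_mul_eq_one_right haa
    have hwne : (b : G) * (a : G)⁻¹ ≠ 1 := by
      intro h
      rw [mul_inv_eq_one] at h
      exact hba (Subtype.coe_injective h)
    have hw2 : ((b : G) * (a : G)⁻¹) * ((b : G) * (a : G)⁻¹) = 1 := by
      have hcomm : (b : G) * (a : G)⁻¹ = (a : G)⁻¹ * (b : G) :=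
        (Subgroup.mem_center_iff.mp ((Subgroup.center G).inv_mem a.2) (b : G))
      calc ((b : G) * (a : G)⁻¹) * ((b : G) * (a : G)⁻¹)
          = (b : G) * ((a : G)⁻¹ * (b : G)) * (a : G)⁻¹ := by group
        _ = (b : G) * ((b : G) * (a : G)⁻¹) * (a : G)⁻¹ := by rw [hcomm]
        _ = ((b : G) * (b : G)) * ((a : G) * (a : G))⁻¹ := by group
        _ = 1 := by rw [haa, hbb]; group
    have how : orderOf ((b : G) * (a : G)⁻¹) = 2 :=
      orderOf_eq_prime (by rw [pow_two]; exact hw2) hwne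
    apply oc_nilp 2 Nat.prime_two
    intro x hco
    by_contra hx
    refine oc_key hOC x (a : G) (b : G) hx a.2 b.2 (by rw [hoa, hob]) ?_ ?_ ?_
    · rw [hoa]; exact hco
    · rw [how]; exact hco
    · exact hwne
end

section
/- If G is a finite OC-group, then the quotient G/Z(G) is a rational group; that is, for every element x of G/Z(G) and every integer m coprime to the order of x, x^m is conjugate to x in G/Z(G). -/
/-- **Lemma 2.2.** If `G` is a finite OC-group, then `G / Z(G)` is a
rational group: for every `x` in the quotient and every integer `m` coprime to the
order of `x`, `x ^ m` is conjugate to `x`. -/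
theorem oc_group_quotient_center_rational (G : Type) [Group G] [Finite G]
    (hOC : ∀ x y : G, x ∉ Subgroup.center G → y ∉ Subgroup.center G →
      orderOf x = orderOf y → IsConj x y) :
    ∀ (x : G ⧸ Subgroup.center G) (m : ℤ), Int.gcd m (orderOf x) = 1 →
      IsConj (x ^ m) x := by
  intro x m hm
  obtain ⟨g, rfl⟩ := QuotientGroup.mk_surjective x
  set φ : G →* G ⧸ Subgroup.center G := QuotientGroup.mk' (Subgroup.center G) with hφ
  show IsConj ((φ g) ^ m) (φ g)
  have hm' : Int.gcd m (orderOf (φ g)) = 1 := hm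
  by_cases hg : g ∈ Subgroup.center G
  · have h1 : (φ g) = 1 := (QuotientGroup.eq_one_iff g).mpr hg
    rw [h1, one_zpow]
  · set n := orderOf (φ g) with hn
    have hn0 : 0 < n := orderOf_pos _
    set N := orderOf g with hN
    have hN0 : NeZero N := ⟨(orderOf_pos g).ne'⟩
    have hdvd : n ∣ N := orderOf_map_dvd φ g
    -- reduce to natural exponent k
    set k : ℕ := (m % n).toNat with hk
    have hmk : (k : ℤ) = m % n := Int.toNat_of_nonneg
      (Int.emod_nonneg m (by exact_mod_cast hn0.ne'))
    have hxk : (φ g) ^ m = (φ g) ^ k := by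
      rw [← zpow_natCast, hmk, zpow_mod_orderOf]
    have hc1 : IsCoprime m (n : ℤ) := Int.isCoprime_iff_gcd_eq_one.mpr hm'
    have hc2 : IsCoprime ((k : ℤ)) (n : ℤ) := by
      rw [hmk, Int.emod_def]
      simpa [mul_neg, sub_eq_add_neg, mul_comm] using hc1.add_mul_right_left (-(m / n))
    have hkcop : Nat.Coprime k n := by
      have := Int.isCoprime_iff_gcd_eq_one.mp hc2
      simpa [Int.gcd_natCast_natCast] using this
    -- lift the unit k of ZMod n to a unit of ZMod N
    obtain ⟨v, hv⟩ := ZMod.unitsMap_surjective hdvd (ZMod.unitOfCoprime k hkcop)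
    set k' : ℕ := (v : ZMod N).val with hk'
    have hk'cop : Nat.Coprime k' N := ZMod.val_coe_unit_coprime v
    have hNeZ : NeZero n := ⟨hn0.ne'⟩
    have hmod : k' ≡ k [MOD n] := by
      have := congrArg (fun u : (ZMod n)ˣ => (u : ZMod n)) hv
      have hcast : ((ZMod.castHom hdvd (ZMod n)) ((v : ZMod N))) = ((k : ℕ) : ZMod n) := by
        simpa [ZMod.unitsMap_def] using this
      have : ((k' : ℕ) : ZMod n) = ((k : ℕ) : ZMod n) := by
        rw [hk', ZMod.natCast_val]
        exact hcast
      exact (ZMod.natCast_eq_natCast_iff _ _ _).mp this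
    -- g ^ k' has the same order as g and lies outside the center
    have horder : orderOf (g ^ k') = orderOf g :=
      Nat.Coprime.orderOf_pow (by simpa [Nat.coprime_comm] using hk'cop)
    have himg : φ (g ^ k') = (φ g) ^ k := by
      rw [map_pow]
      exact pow_eq_pow_iff_modEq.mpr hmod
    have hne1 : (φ g) ^ k ≠ 1 := by
      intro h
      have : n ∣ k := orderOf_dvd_of_pow_eq_one h
      have : n = 1 := hkcop.symm.eq_one_of_dvd this
      have : φ g = 1 := orderOf_eq_one_iff.mp (by rw [← hn, this])
      exact hg ((QuotientGroup.eq_one_iff g).mp this)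
    have hgk' : g ^ k' ∉ Subgroup.center G := by
      intro h
      apply hne1
      rw [← himg]
      exact (QuotientGroup.eq_one_iff _).mpr h
    have hconj : IsConj (g ^ k') g := hOC _ _ hgk' hg horder
    have := φ.map_isConj hconj
    rw [himg] at this
    rwa [hxk]
end

section
/- Let q be a prime and let r, a be positive integers with r > 1. If q^r - 1 divides 2^a · 3^2 · 5 · 7, then q ∈ {2, 3, 5, 7, 11, 13, 17, 19, 29, 31, 41, 71, 127}; moreover, if q = 2 then r ∈ {2, 3, 4, 6}, if q = 3 then r ∈ {2, 4}, and if q > 3 then r = 2. -/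
private lemma odd_dvd_315 {n m a : ℕ} (hn : Odd n) (h : n ∣ 2 ^ a * m) : n ∣ m := by
  have hcop : Nat.Coprime n (2 ^ a) :=
    Nat.Coprime.pow_right _ (Nat.coprime_two_right.mpr hn)
  exact hcop.dvd_of_dvd_mul_left h

private lemma dvd_shrink {n m : ℕ} (a b : ℕ) (hm : Odd m) (h : n ∣ 2 ^ a * m)
    (hb : n < 2 ^ (b + 1)) : n ∣ 2 ^ b * m := by
  have hm0 : 0 < m := hm.pos
  have hn0 : n ≠ 0 := by
    rintro rfl
    have h0 := Nat.eq_zero_of_zero_dvd h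
    have : 0 < 2 ^ a * m := by positivity
    omega
  set k := n.factorization 2 with hk
  have h1 : 2 ^ k ∣ n := Nat.ordProj_dvd n 2
  have h2 : ¬ 2 ∣ n / 2 ^ k := Nat.not_dvd_ordCompl Nat.prime_two hn0
  have h3 : 2 ^ k * (n / 2 ^ k) = n := Nat.mul_div_cancel' h1
  have hu : Odd (n / 2 ^ k) := Nat.odd_iff.mpr (by omega)
  have hum : (n / 2 ^ k) ∣ m := odd_dvd_315 hu ((Nat.div_dvd_of_dvd h1).trans h)
  have hkb : k ≤ b := by
    have hle : 2 ^ k ≤ n := Nat.le_of_dvd (Nat.pos_of_ne_zero hn0) h1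
    have : 2 ^ k < 2 ^ (b + 1) := lt_of_le_of_lt hle hb
    exact Nat.lt_succ_iff.mp ((Nat.pow_lt_pow_iff_right (a := 2) (by norm_num)).mp this)
  calc n = 2 ^ k * (n / 2 ^ k) := h3.symm
    _ ∣ 2 ^ b * m := mul_dvd_mul (pow_dvd_pow 2 hkb) hum

private lemma pow_two_of_no_odd (r : ℕ) (hr : 1 < r)
    (h : ∀ p, p.Prime → Odd p → ¬ p ∣ r) : ∃ k, 1 ≤ k ∧ r = 2 ^ k := by
  induction r using Nat.strong_induction_on with
  | _ r ih =>
    have hr1 : r ≠ 1 := by omega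
    have hr2 : 2 ∣ r := by
      by_contra h2
      have hp := Nat.minFac_prime hr1
      have hdvd := Nat.minFac_dvd r
      have hodd : Odd r.minFac := by
        rcases hp.eq_two_or_odd' with h' | h'
        · exact absurd (h' ▸ hdvd) h2
        · exact h'
      exact h r.minFac hp hodd hdvd
    obtain ⟨s, rfl⟩ := hr2
    rcases eq_or_ne s 1 with rfl | hs1
    · exact ⟨1, le_refl _, rfl⟩
    · have hs0 : s ≠ 0 := by rintro rfl; omega
      have hs : 1 < s := by omega
      obtain ⟨k, hk1, rfl⟩ := ih s (by omega) hs
        (fun p pp po pd => h p pp po (Dvd.dvd.mul_left pd 2))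
      exact ⟨k + 1, by omega, by ring⟩

private lemma geom_dvd (q p : ℕ) (hq : 1 ≤ q) :
    (∑ i ∈ Finset.range p, q ^ i) ∣ q ^ p - 1 := by
  have h := geom_sum_mul (q : ℤ) p
  have hd : ((∑ i ∈ Finset.range p, q ^ i : ℕ) : ℤ) ∣ ((q ^ p - 1 : ℕ) : ℤ) := by
    rw [Nat.cast_sub (Nat.one_le_pow _ _ hq)]
    push_cast
    exact Dvd.intro _ h
  exact_mod_cast hd

private lemma odd_geom (q p : ℕ) (hq : Odd q) (hp : Odd p) :
    Odd (∑ i ∈ Finset.range p, q ^ i) := by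
  rw [Nat.odd_iff, Finset.sum_nat_mod]
  have h1 : ∀ i ∈ Finset.range p, q ^ i % 2 = 1 := fun i _ => Nat.odd_iff.mp hq.pow
  rw [Finset.sum_congr rfl h1]
  simp [Nat.odd_iff.mp hp]

private lemma no_odd_prime_factor {q r a : ℕ} (hq : q.Prime) (hqodd : Odd q)
    (h315 : (q ^ r - 1) ∣ 2 ^ a * 315) : ∀ p, p.Prime → Odd p → ¬ p ∣ r := by
  rintro p pp podd ⟨c, rfl⟩
  have hq1 : 1 ≤ q := hq.one_lt.le
  have hq3 : 3 ≤ q := by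
    have := hq.two_le
    rcases eq_or_ne q 2 with rfl | h2
    · exact absurd hqodd (by decide)
    · omega
  set S := ∑ i ∈ Finset.range p, q ^ i with hS
  have hSd1 : S ∣ q ^ p - 1 := geom_dvd q p hq1
  have hd2 : q ^ p - 1 ∣ q ^ (p * c) - 1 := by
    have h := Nat.sub_dvd_pow_sub_pow (q ^ p) 1 c
    simpa [← pow_mul] using h
  have hS315 : S ∣ 315 :=
    odd_dvd_315 (odd_geom q p hqodd podd) ((hSd1.trans hd2).trans h315)
  have hSle : S ≤ 315 := Nat.le_of_dvd (by norm_num) hS315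
  have hp3 : 3 ≤ p := by
    have := pp.two_le
    rcases eq_or_ne p 2 with rfl | h2
    · exact absurd podd (by decide)
    · omega
  have hql : q ^ (p - 1) ≤ S := by
    refine Finset.single_le_sum (f := fun i => q ^ i) (fun i _ => Nat.zero_le _) ?_
    exact Finset.mem_range.mpr (by omega)
  have hppow : 3 ^ (p - 1) ≤ 315 :=
    le_trans (Nat.pow_le_pow_left hq3 _) (hql.trans hSle)
  have hp6 : p ≤ 6 := by
    by_contra hcon
    have : 3 ^ 6 ≤ 3 ^ (p - 1) := Nat.pow_le_pow_right (by norm_num) (by omega)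
    norm_num at this
    omega
  have hq2le : q ^ 2 ≤ 315 := by
    calc q ^ 2 ≤ q ^ (p - 1) := Nat.pow_le_pow_right hq1 (by omega)
      _ ≤ 315 := hql.trans hSle
  have hq17 : q ≤ 17 := by nlinarith
  interval_cases p
  · -- p = 3
    have hSeq : S = 1 + q + q ^ 2 := by
      simp [hS, Finset.sum_range_succ]
    rw [hSeq] at hS315
    have hqo := Nat.odd_iff.mp hqodd
    interval_cases q <;> revert hS315 <;> simp_all <;> decide
  · exact absurd podd (by decide)
  · -- p = 5
    have hq4 : q ^ 4 ≤ 315 := by simpa using hql.trans hSle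
    have hq4' : q ≤ 4 := by
      by_contra hcon
      have : 5 ^ 4 ≤ q ^ 4 := Nat.pow_le_pow_left (by omega) 4
      norm_num at this
      omega
    have : q = 3 := by
      have hqo := Nat.odd_iff.mp hqodd
      omega
    subst this
    rw [show S = 121 by simp [hS, Finset.sum_range_succ]] at hS315
    norm_num at hS315
  · exact absurd podd (by decide)

private lemma not_four_dvd {q r a : ℕ} (hqodd : Odd q) (hq5 : 5 ≤ q)
    (h315 : (q ^ r - 1) ∣ 2 ^ a * 315) : ¬ 4 ∣ r := by
  rintro ⟨c, rfl⟩
  have hq8 : q ^ 2 % 8 = 1 := by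
    obtain ⟨m, rfl⟩ := hqodd
    have h1 : (2 * m + 1) ^ 2 = 4 * (m * (m + 1)) + 1 := by ring
    have h2 : 2 ∣ m * (m + 1) := (Nat.even_mul_succ_self m).two_dvd
    omega
  set t := (q ^ 2 + 1) / 2 with ht
  have h2t : q ^ 2 + 1 = 2 * t ∧ t % 2 = 1 := by omega
  have htodd : Odd t := Nat.odd_iff.mpr h2t.2
  have htd : t ∣ q ^ 2 + 1 := ⟨2, by omega⟩
  have h41 : q ^ 2 + 1 ∣ q ^ 4 - 1 := by
    have hsq := Nat.sq_sub_sq (q ^ 2) 1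
    have h4 : (q ^ 2) ^ 2 = q ^ 4 := by ring
    rw [h4, one_pow] at hsq
    exact hsq ▸ Dvd.intro _ rfl
  have hd2 : q ^ 4 - 1 ∣ q ^ (4 * c) - 1 := by
    have h := Nat.sub_dvd_pow_sub_pow (q ^ 4) 1 c
    simpa [← pow_mul] using h
  have ht315 : t ∣ 315 :=
    odd_dvd_315 htodd (((htd.trans h41).trans hd2).trans h315)
  have htle : t ≤ 315 := Nat.le_of_dvd (by norm_num) ht315
  have hq2 : q ^ 2 ≤ 629 := by omega
  have hq25 : q ≤ 25 := by nlinarith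
  have hqo := Nat.odd_iff.mp hqodd
  interval_cases q <;> revert ht315 <;> simp_all <;> decide

private lemma q3_not_eight {r a : ℕ} (h315 : (3 ^ r - 1) ∣ 2 ^ a * 315) : ¬ 8 ∣ r := by
  rintro ⟨c, rfl⟩
  have h1 : (41 : ℕ) ∣ 3 ^ 8 - 1 := by norm_num
  have h2 : (3:ℕ) ^ 8 - 1 ∣ 3 ^ (8 * c) - 1 := by
    have h := Nat.sub_dvd_pow_sub_pow ((3:ℕ) ^ 8) 1 c
    rw [one_pow, ← pow_mul] at h
    exact h
  have h3 : (41 : ℕ) ∣ 315 :=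
    odd_dvd_315 (by decide) ((h1.trans h2).trans h315)
  norm_num at h3

set_option maxRecDepth 100000 in
set_option maxHeartbeats 1000000 in
private lemma big_decide : ∀ x ∈ Finset.range 632, 7 < x → x % 2 = 1 → ¬3∣x → ¬5∣x → ¬7∣x →
    (x-1) ∣ 161280 → (x+1) ∣ 161280 →
    (x = 11 ∨ x = 13 ∨ x = 17 ∨ x = 19 ∨ x = 29 ∨ x = 31 ∨ x = 41 ∨ x = 71 ∨ x = 127) := by
  decide

/-- **Lemma 2.4.** Let `q` be a prime and `r, a` positive integers with
`r > 1`. If `q ^ r - 1` divides `2 ^ a * 3 ^ 2 * 5 * 7`, then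
`q ∈ {2, 3, 5, 7, 11, 13, 17, 19, 29, 31, 41, 71, 127}`; moreover `r ∈ {2, 3, 4, 6}`
if `q = 2`, `r ∈ {2, 4}` if `q = 3`, and `r = 2` if `q > 3`. -/
theorem divisor_constraint_prime_power (q r a : ℕ) (hq : q.Prime) (hr : 1 < r)
    (ha : 0 < a) (hdvd : (q ^ r - 1) ∣ 2 ^ a * 3 ^ 2 * 5 * 7) :
    q ∈ ({2, 3, 5, 7, 11, 13, 17, 19, 29, 31, 41, 71, 127} : Set ℕ) ∧
      (q = 2 → r ∈ ({2, 3, 4, 6} : Set ℕ)) ∧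
      (q = 3 → r ∈ ({2, 4} : Set ℕ)) ∧
      (3 < q → r = 2) := by
  have h315 : (q ^ r - 1) ∣ 2 ^ a * 315 := by
    have he : 2 ^ a * 3 ^ 2 * 5 * 7 = 2 ^ a * 315 := by ring
    rwa [he] at hdvd
  rcases eq_or_ne q 2 with rfl | hq2
  · -- q = 2
    have h1 : 1 ≤ 2 ^ r := Nat.one_le_two_pow
    have h2 : 2 ∣ 2 ^ r := dvd_pow_self 2 (by omega)
    have hodd : Odd (2 ^ r - 1) := Nat.odd_iff.mpr (by omega)
    have hd : (2 ^ r - 1) ∣ 315 := odd_dvd_315 hodd h315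
    have hle : 2 ^ r - 1 ≤ 315 := Nat.le_of_dvd (by norm_num) hd
    have hr8 : r ≤ 8 := by
      by_contra hcon
      have : 2 ^ 9 ≤ 2 ^ r := Nat.pow_le_pow_right (by norm_num) (by omega)
      norm_num at this
      omega
    refine ⟨by simp, ?_, by omega, by omega⟩
    intro _
    interval_cases r <;> revert hd <;> decide
  · have hqodd : Odd q := hq.odd_of_ne_two hq2
    have hnop := no_odd_prime_factor hq hqodd h315
    obtain ⟨k, hk1, rfl⟩ := pow_two_of_no_odd r hr hnop
    rcases eq_or_ne q 3 with rfl | hq3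
    · -- q = 3
      have h8 : ¬ 8 ∣ 2 ^ k := q3_not_eight h315
      have hk3 : k ≤ 2 := by
        by_contra hcon
        exact h8 (by calc (8:ℕ) = 2 ^ 3 := by norm_num
                    _ ∣ 2 ^ k := pow_dvd_pow 2 (by omega))
      refine ⟨by simp, by omega, ?_, by omega⟩
      intro _
      interval_cases k
      · left; norm_num
      · right; norm_num
    · -- q > 3
      have hq5 : 5 ≤ q := by
        have h2 := hq.two_le
        have h4 : q ≠ 4 := by rintro rfl; norm_num at hq
        omega
      have h4 : ¬ 4 ∣ 2 ^ k := not_four_dvd hqodd hq5 h315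
      have hk1' : k = 1 := by
        by_contra hcon
        exact h4 (by calc (4:ℕ) = 2 ^ 2 := by norm_num
                    _ ∣ 2 ^ k := pow_dvd_pow 2 (by omega))
      subst hk1'
      have hpow : q ^ 2 ^ 1 = q ^ 2 := by norm_num
      rw [hpow] at h315
      have hd1 : (q - 1) ∣ 2 ^ a * 315 := by
        have h := Nat.sub_dvd_pow_sub_pow q 1 2
        rw [one_pow] at h
        exact h.trans h315
      have hd2 : (q + 1) ∣ 2 ^ a * 315 := by
        have hsq := Nat.sq_sub_sq q 1
        rw [one_pow] at hsq
        exact (hsq ▸ Dvd.intro _ rfl).trans h315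
      have hqo := Nat.odd_iff.mp hqodd
      have hqb : q ≤ 631 := by
        rcases (by omega : q % 4 = 1 ∨ q % 4 = 3) with h4m | h4m
        · set t := (q + 1) / 2 with ht
          have h2t : q + 1 = 2 * t ∧ t % 2 = 1 := by omega
          have htd : t ∣ q + 1 := ⟨2, by omega⟩
          have ht315 : t ∣ 315 := odd_dvd_315 (Nat.odd_iff.mpr h2t.2) (htd.trans hd2)
          have := Nat.le_of_dvd (by norm_num) ht315
          omega
        · set t := (q - 1) / 2 with ht
          have h2t : q - 1 = 2 * t ∧ t % 2 = 1 := by omega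
          have htd : t ∣ q - 1 := ⟨2, by omega⟩
          have ht315 : t ∣ 315 := odd_dvd_315 (Nat.odd_iff.mpr h2t.2) (htd.trans hd1)
          have := Nat.le_of_dvd (by norm_num) ht315
          omega
      have hb1 : (q - 1) ∣ 161280 := by
        have h := dvd_shrink a 9 (by decide : Odd 315) hd1 (by norm_num; omega)
        norm_num at h
        exact h
      have hb2 : (q + 1) ∣ 161280 := by
        have h := dvd_shrink a 9 (by decide : Odd 315) hd2 (by norm_num; omega)
        norm_num at h
        exact h
      rcases le_or_gt q 7 with hle7 | hgt7
      · have : q = 5 ∨ q = 7 := by omega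
        refine ⟨?_, by omega, by omega, fun _ => rfl⟩
        rcases this with rfl | rfl <;> simp
      · have h3 : ¬ 3 ∣ q := fun h => by
          rcases (Nat.Prime.eq_one_or_self_of_dvd hq 3 h) with h' | h' <;> omega
        have h5 : ¬ 5 ∣ q := fun h => by
          rcases (Nat.Prime.eq_one_or_self_of_dvd hq 5 h) with h' | h' <;> omega
        have h7 : ¬ 7 ∣ q := fun h => by
          rcases (Nat.Prime.eq_one_or_self_of_dvd hq 7 h) with h' | h' <;> omega
        have key := big_decide q (Finset.mem_range.mpr (by omega)) hgt7 hqo h3 h5 h7 hb1 hb2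
        refine ⟨?_, by omega, by omega, fun _ => rfl⟩
        simp only [Set.mem_insert_iff, Set.mem_singleton_iff]
        omega
end

section
/- For any finite group G, the quotient G/Z(G) is not isomorphic to a generalized quaternion group; that is, for every n ≥ 3, G/Z(G) is not isomorphic to the generalized quaternion group of order 2^n. -/
/-!
If `G ⧸ Z(G)` is the union of a cyclic subgroup `⟨c⟩` and its coset `⟨c⟩ y` with `y ^ 2 ∈ ⟨c⟩`,
then the preimage `A` of `⟨c⟩` in `G` is abelian (it is a central extension of a cyclic group).
A lift `x` of `y` has `x ^ 2 ∈ A`, so `x ^ 2` commutes with `A` and with `x`, hence with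
`A ∪ A x = G`; thus `y ^ 2 = 1`. In the generalized quaternion group, with `c = a 1` and
`y = xa 0`, the element `y ^ 2` has order two.
-/

open Subgroup

theorem MonoidHom.isMulCommutative_comap_zpowers {G H : Type*} [Group G] [Group H]
    (π : G →* H) (hker : π.ker ≤ center G) (c : H) :
    IsMulCommutative ((zpowers c).comap π) := by
  refine (π.subgroupComap (zpowers c)).isMulCommutative_of_isCyclic_of_ker_le_center
    fun a ha ↦ mem_center_iff.mpr fun b ↦ Subtype.ext ?_
  exact mem_center_iff.mp (hker (MonoidHom.mem_ker.mpr (congrArg Subtype.val ha))) b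

theorem Subgroup.sq_mem_center_of_forall_mem_or_mul_inv_mem {G : Type*} [Group G]
    (A : Subgroup G) [IsMulCommutative A] {x : G} (hx : x ^ 2 ∈ A)
    (hcov : ∀ g, g ∈ A ∨ g * x⁻¹ ∈ A) : x ^ 2 ∈ center G := by
  have hA : ∀ a ∈ A, Commute a (x ^ 2) := fun a ha ↦
    congrArg Subtype.val (IsMulCommutative.is_comm.comm (⟨a, ha⟩ : A) ⟨x ^ 2, hx⟩)
  refine mem_center_iff.mpr fun g ↦ ?_
  rcases hcov g with hg | hg
  · exact hA g hg
  · simpa using ((hA _ hg).mul_left (Commute.self_pow x 2)).eq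

theorem MonoidHom.sq_eq_one_of_ker_eq_center {G H : Type*} [Group G] [Group H]
    (π : G →* H) (hπ : Function.Surjective π) (hker : π.ker = center G) {c y : H}
    (hy : y ^ 2 ∈ zpowers c) (hcov : ∀ h, h ∈ zpowers c ∨ h * y⁻¹ ∈ zpowers c) :
    y ^ 2 = 1 := by
  obtain ⟨x, rfl⟩ := hπ y
  have := π.isMulCommutative_comap_zpowers hker.le c
  rw [← map_pow, ← MonoidHom.mem_ker, hker]
  exact ((zpowers c).comap π).sq_mem_center_of_forall_mem_or_mul_inv_mem (by simpa using hy)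
    fun g ↦ by simpa using hcov (π g)

namespace QuaternionGroup

variable {n : ℕ}

theorem a_one_zpow (k : ℤ) : (a 1 : QuaternionGroup n) ^ k = a k := by
  rcases k with k | k
  · simp [a_one_pow]
  · rw [zpow_negSucc, a_one_pow, Int.cast_negSucc]
    rfl

theorem xa_inv (i : ZMod (2 * n)) : (xa i)⁻¹ = (xa (n + i) : QuaternionGroup n) :=
  rfl

theorem a_mem_zpowers_a_one (i : ZMod (2 * n)) : a i ∈ zpowers (a 1 : QuaternionGroup n) :=
  ⟨i.cast, by simp [a_one_zpow]⟩

theorem mem_zpowers_a_one_or_mul_inv_xa_zero_mem (q : QuaternionGroup n) :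
    q ∈ zpowers (a 1) ∨ q * (xa 0)⁻¹ ∈ zpowers (a 1) := by
  rcases q with i | i
  · exact .inl (a_mem_zpowers_a_one i)
  · right
    rw [xa_inv, xa_mul_xa]
    exact a_mem_zpowers_a_one _

theorem xa_sq_ne_one [NeZero n] (i : ZMod (2 * n)) : xa i ^ 2 ≠ (1 : QuaternionGroup n) :=
  fun h ↦ by simpa [orderOf_xa] using orderOf_dvd_of_pow_eq_one h

end QuaternionGroup

theorem quotient_center_not_generalized_quaternion_general (G : Type) [Group G]
    (n : ℕ) :
    IsEmpty ((G ⧸ Subgroup.center G) ≃* QuaternionGroup (2 ^ (n - 2))) := by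
  refine ⟨fun e ↦ ?_⟩
  have hker : (e.toMonoidHom.comp (QuotientGroup.mk' _)).ker = center G := by
    rw [MonoidHom.ker_comp_of_injective _ _ e.injective, QuotientGroup.ker_mk']
  refine QuaternionGroup.xa_sq_ne_one 0 (MonoidHom.sq_eq_one_of_ker_eq_center _
    (e.surjective.comp (QuotientGroup.mk'_surjective _)) hker ?_
    QuaternionGroup.mem_zpowers_a_one_or_mul_inv_xa_zero_mem)
  rw [QuaternionGroup.xa_sq]
  exact QuaternionGroup.a_mem_zpowers_a_one _

/-- **Lemma 2.5.** For any finite group `G`, the quotient `G / Z(G)` is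
not isomorphic to a generalized quaternion group of order `2 ^ n`, `n ≥ 3`. -/
theorem quotient_center_not_generalized_quaternion (G : Type) [Group G] [Finite G]
    (n : ℕ) (hn : 3 ≤ n) :
    IsEmpty ((G ⧸ Subgroup.center G) ≃* QuaternionGroup (2 ^ (n - 2))) :=
  quotient_center_not_generalized_quaternion_general G n
end

section
/- Let G be a finite nilpotent OC-group with 1 < Z(G) < G. Then the normal 2-complement H of G is abelian, so G = P × H where P is a non-abelian Sylow 2-subgroup of G; moreover P is itself a non-trivial OC-group. -/
/-!
Nilpotency makes the Sylow 2-subgroup `P` normal. It meets `H` trivially and `G ⧸ H` is a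
2-group, so `G = P × H`. If `h ∈ H` were not central, the OC property would conjugate `h` to
`h⁻¹` by some `c = a k` with `a ∈ P`, `k ∈ H`; as `a` centralizes `h`, the odd-order element `k`
inverts `h`, and an odd power of it is trivial, so `h = h⁻¹` and `h = 1`. Hence `H ≤ Z(G)`: then
`P` cannot be abelian (else `G` is), conjugation in `G` is conjugation by elements of `P`, and
the non-abelian 2-group `P` has `1 < Z(P) < P`.
-/

open Subgroup

def IsOCGroup (G : Type*) [Group G] : Prop :=
  ∀ x y : G, x ∉ center G → y ∉ center G → orderOf x = orderOf y → IsConj x y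

variable {G : Type*} [Group G]

theorem SemiconjBy.pow_odd_inv {c h : G} (hc : SemiconjBy c h h⁻¹) {n : ℕ} (hn : Odd n) :
    SemiconjBy (c ^ n) h h⁻¹ := by
  obtain ⟨k, rfl⟩ := hn
  have hsq : Commute (c ^ 2) h := by
    rw [sq]
    exact (inv_inv h ▸ hc.inv_right).mul_left hc
  rw [pow_succ, pow_mul]
  exact SemiconjBy.mul_left (hsq.pow_left k).inv_right hc

theorem eq_one_of_semiconjBy_inv {c h : G} (hc : SemiconjBy c h h⁻¹) (hcodd : Odd (orderOf c))
    (hodd : Odd (orderOf h)) : h = 1 := by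
  have hinv : h = h⁻¹ := by simpa [SemiconjBy] using hc.pow_odd_inv hcodd
  have hdvd : orderOf h ∣ 2 :=
    orderOf_dvd_of_pow_eq_one (by rw [sq]; nth_rw 2 [hinv]; exact mul_inv_cancel h)
  exact orderOf_eq_one_iff.mp
    (Nat.eq_one_of_dvd_coprimes (Nat.coprime_two_right.mpr hodd) dvd_rfl hdvd)

theorem Subgroup.mem_center_of_coe_mem_center {K : Subgroup G} {x : K}
    (hx : (x : G) ∈ center G) : x ∈ center K :=
  mem_center_iff.mpr fun g => Subtype.ext (mem_center_iff.mp hx g)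

theorem Subgroup.center_eq_top_of_sup_eq_top {P H : Subgroup G} [IsMulCommutative P]
    (hPH : P ⊔ H = ⊤) (hH : H ≤ center G) : center G = ⊤ := by
  have hP : ⊤ ≤ centralizer (P : Set G) :=
    hPH ▸ sup_le (le_centralizer P) (hH.trans (center_le_centralizer _))
  rw [eq_top_iff, ← hPH]
  refine sup_le ?_ hH
  simpa [centralizer_univ] using le_centralizer_iff.mpr hP

section Sylow

variable {p : ℕ} [hp : Fact p.Prime]

theorem IsPGroup.disjoint_of_not_dvd_orderOf {P H : Subgroup G} (hP : IsPGroup p P)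
    (hH : ∀ x ∈ H, ¬ p ∣ orderOf x) : Disjoint P H := by
  refine disjoint_def.mpr fun {x} hxP hxH => ?_
  obtain ⟨k, hk⟩ := IsPGroup.iff_orderOf.mp hP ⟨x, hxP⟩
  rw [orderOf_mk] at hk
  cases k with
  | zero => exact orderOf_eq_one_iff.mp hk
  | succ k => exact absurd (hk ▸ dvd_pow_self p k.succ_ne_zero) (hH x hxH)

variable [Finite G]

theorem isPGroup_quotient_of_not_dvd_orderOf_mem (H : Subgroup G) [H.Normal]
    (hH : ∀ x, ¬ p ∣ orderOf x → x ∈ H) : IsPGroup p (G ⧸ H) := by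
  intro g
  induction g using QuotientGroup.induction_on with | H g => ?_
  refine ⟨(orderOf g).factorization p, ?_⟩
  rw [← QuotientGroup.mk_pow, QuotientGroup.eq_one_iff]
  refine hH _ fun hdvd => Nat.not_dvd_ordCompl hp.out (orderOf_pos g).ne' (hdvd.trans ?_)
  refine orderOf_dvd_of_pow_eq_one ?_
  rw [← pow_mul, Nat.ordProj_mul_ordCompl_eq_self, pow_orderOf_eq_one]

theorem Sylow.sup_eq_top_of_isPGroup_quotient (P : Sylow p G) (H : Subgroup G) [H.Normal]
    (hH : IsPGroup p (G ⧸ H)) : (P : Subgroup G) ⊔ H = ⊤ := by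
  obtain ⟨n, hn⟩ := IsPGroup.iff_card.mp hH
  have hcop : Nat.Coprime (p ^ n) (P : Subgroup G).index :=
    ((Nat.Prime.coprime_iff_not_dvd hp.out).mpr P.not_dvd_index).pow_left n
  rw [← index_eq_one]
  exact Nat.eq_one_of_dvd_coprimes hcop (hn ▸ index_dvd_of_le le_sup_right)
    (index_dvd_of_le le_sup_left)

theorem Sylow.isComplement'_of_forall_mem_iff (P : Sylow p G) (H : Subgroup G) [H.Normal]
    (hH : ∀ x, x ∈ H ↔ ¬ p ∣ orderOf x) : (P : Subgroup G).IsComplement' H := by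
  refine isComplement'_of_disjoint_and_mul_eq_univ
    (P.isPGroup'.disjoint_of_not_dvd_orderOf fun x hx => (hH x).mp hx) ?_
  rw [← mul_normal, P.sup_eq_top_of_isPGroup_quotient H
    (isPGroup_quotient_of_not_dvd_orderOf_mem H fun x => (hH x).mpr), coe_top]

end Sylow

namespace IsOCGroup

theorem isConj_inv (hG : IsOCGroup G) {x : G} (hx : x ∉ center G) : IsConj x x⁻¹ :=
  hG x x⁻¹ hx (by rwa [inv_mem_iff]) (orderOf_inv x).symm

theorem le_center_of_isComplement' (hG : IsOCGroup G) {P H : Subgroup G}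
    (hPH : P.IsComplement' H) (hcomm : P ≤ centralizer H) (hH : ∀ x ∈ H, Odd (orderOf x)) :
    H ≤ center G := by
  intro h hh
  by_contra hnc
  obtain ⟨c, hc⟩ := isConj_iff.mp (hG.isConj_inv hnc)
  obtain ⟨⟨⟨a, ha⟩, ⟨k, hk⟩⟩, rfl⟩ := hPH.2 c
  have hak : SemiconjBy (a * k) h h⁻¹ := mul_inv_eq_iff_eq_mul.mp hc
  have ha' : Commute a⁻¹ h⁻¹ := (show Commute a h⁻¹ from (hcomm ha _ (inv_mem hh)).symm).inv_left
  have hkh : SemiconjBy k h h⁻¹ := by simpa using SemiconjBy.mul_left ha' hak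
  exact hnc (eq_one_of_semiconjBy_inv hkh (hH k hk) (hH h hh) ▸ one_mem _)

theorem of_isComplement'_of_le_center (hG : IsOCGroup G) {P H : Subgroup G}
    (hPH : P.IsComplement' H) (hH : H ≤ center G) : IsOCGroup P := by
  intro x y hx hy hxy
  obtain ⟨c, hc⟩ := isConj_iff.mp (hG x y (mt mem_center_of_coe_mem_center hx)
    (mt mem_center_of_coe_mem_center hy) (by rwa [orderOf_coe, orderOf_coe]))
  obtain ⟨⟨⟨a, ha⟩, ⟨k, hk⟩⟩, rfl⟩ := hPH.2 c
  have hkx : k * x * k⁻¹ = x := by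
    rw [(mem_center_iff.mp (hH hk) x).symm, mul_inv_cancel_right]
  refine isConj_iff.mpr ⟨⟨a, ha⟩, Subtype.ext ?_⟩
  simp only [coe_mul, coe_inv]
  rw [← hc]
  nth_rw 1 [← hkx]
  group

end IsOCGroup

theorem nilpotent_oc_group_structure_general (G : Type) [Group G] [Finite G]
    (hnilp : Group.IsNilpotent G)
    (hOC : ∀ x y : G, x ∉ Subgroup.center G → y ∉ Subgroup.center G →
      orderOf x = orderOf y → IsConj x y)
    (h2 : Subgroup.center G < ⊤)
    (H : Subgroup G) (hHnormal : H.Normal)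
    (hH : ∀ x : G, x ∈ H ↔ Odd (orderOf x)) :
    (∀ a b : H, a * b = b * a) ∧
    ∃ P : Sylow 2 G,
      (¬ ∀ a b : (P : Subgroup G), a * b = b * a) ∧
      (P : Subgroup G).Normal ∧
      (P : Subgroup G).IsComplement' H ∧
      (∀ x y : (P : Subgroup G),
        x ∉ Subgroup.center (P : Subgroup G) → y ∉ Subgroup.center (P : Subgroup G) →
        orderOf x = orderOf y → IsConj x y) ∧
      ⊥ < Subgroup.center (P : Subgroup G) ∧
      Subgroup.center (P : Subgroup G) < ⊤ := by
  obtain ⟨P⟩ : Nonempty (Sylow 2 G) := inferInstance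
  have hPnormal : (P : Subgroup G).Normal :=
    (Group.isNilpotent_of_finite_tfae.out 0 3 |>.mp hnilp :
      ∀ (p : ℕ) (_ : Fact p.Prime) (Q : Sylow p G), (Q : Subgroup G).Normal) 2 inferInstance P
  have hcompl : (P : Subgroup G).IsComplement' H :=
    P.isComplement'_of_forall_mem_iff H fun x => (hH x).trans (Nat.odd_iff.trans Nat.two_dvd_ne_zero.symm)
  have hHcenter : H ≤ center G :=
    IsOCGroup.le_center_of_isComplement' hOC hcompl
      (fun a ha k hk => commute_of_normal_of_disjoint _ _ hHnormal hPnormal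
        hcompl.disjoint.symm k a hk ha)
      fun x => (hH x).mp
  have hPnc : ¬ IsMulCommutative P := fun _ =>
    h2.ne (center_eq_top_of_sup_eq_top hcompl.sup_eq_top hHcenter)
  have : Nontrivial P := not_subsingleton_iff_nontrivial.mp fun _ =>
    hPnc ⟨⟨fun _ _ => Subsingleton.elim _ _⟩⟩
  refine ⟨fun a b => Subtype.ext (mem_center_iff.mp (hHcenter b.2) a), P,
    fun hcomm => hPnc ⟨⟨hcomm⟩⟩, hPnormal, hcompl,
    IsOCGroup.of_isComplement'_of_le_center hOC hcompl hHcenter, ?_,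
    lt_top_iff_ne_top.mpr (mt center_eq_top_iff.mp hPnc)⟩
  exact bot_lt_iff_ne_bot.mpr ((nontrivial_iff_ne_bot _).mp P.isPGroup'.center_nontrivial)

/-- **Claim 1 in Lemma 2.6.** Let `G` be a finite nilpotent OC-group
with `1 < Z(G) < G`, and let `H` be its normal 2-complement (the subgroup of elements
of odd order).  Then `H` is abelian, `G = P × H` for a non-abelian Sylow 2-subgroup
`P`, and `P` is itself a non-trivial OC-group. -/
theorem nilpotent_oc_group_structure (G : Type) [Group G] [Finite G]
    (hnilp : Group.IsNilpotent G)
    (hOC : ∀ x y : G, x ∉ Subgroup.center G → y ∉ Subgroup.center G →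
      orderOf x = orderOf y → IsConj x y)
    (h1 : ⊥ < Subgroup.center G) (h2 : Subgroup.center G < ⊤)
    (H : Subgroup G) (hHnormal : H.Normal)
    (hH : ∀ x : G, x ∈ H ↔ Odd (orderOf x)) :
    (∀ a b : H, a * b = b * a) ∧
    ∃ P : Sylow 2 G,
      (¬ ∀ a b : (P : Subgroup G), a * b = b * a) ∧
      (P : Subgroup G).Normal ∧
      (P : Subgroup G).IsComplement' H ∧
      (∀ x y : (P : Subgroup G),
        x ∉ Subgroup.center (P : Subgroup G) → y ∉ Subgroup.center (P : Subgroup G) →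
        orderOf x = orderOf y → IsConj x y) ∧
      ⊥ < Subgroup.center (P : Subgroup G) ∧
      Subgroup.center (P : Subgroup G) < ⊤ :=
  nilpotent_oc_group_structure_general G hnilp hOC h2 H hHnormal hH
end

section
/- Let G be a finite rational group in which any two elements of the same odd order are conjugate, and let N be a normal subgroup of G. Then the quotient G/N is a rational group in which any two elements of the same odd order are conjugate. -/
/-- Coprime lift: a residue coprime to `n` lifts to a residue coprime to `k` when `n ∣ k`. -/
lemma coprime_lift_aux (k n : ℕ) (hnk : n ∣ k) (hk : k ≠ 0) (m : ℤ)
    (hm : Int.gcd m n = 1) :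
    ∃ m' : ℕ, Nat.Coprime m' k ∧ (m' : ℤ) ≡ m [ZMOD n] := by
  haveI : NeZero k := ⟨hk⟩
  have h1 : IsCoprime m (n : ℤ) := Int.isCoprime_iff_gcd_eq_one.mpr hm
  have h2 : IsCoprime ((m : ZMod n)) (((n : ℤ) : ZMod n)) :=
    h1.map (Int.castRingHom (ZMod n))
  have h3 : IsUnit ((m : ZMod n)) := by
    rw [show (((n : ℤ) : ZMod n)) = 0 by push_cast; simp] at h2
    exact isCoprime_zero_right.mp h2
  obtain ⟨c, hc⟩ := ZMod.unitsMap_surjective hnk h3.unit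
  refine ⟨((c : ZMod k)).val, ZMod.val_coe_unit_coprime c, ?_⟩
  have hc' : (ZMod.castHom hnk (ZMod n)) (c : ZMod k) = (m : ZMod n) := by
    have := congrArg (Units.val) hc
    simpa [ZMod.unitsMap_def] using this
  have h4 : (((c : ZMod k).val : ℕ) : ZMod n) = (m : ZMod n) := by
    rw [ZMod.natCast_val]
    simpa using hc'
  rw [← ZMod.intCast_eq_intCast_iff]
  push_cast
  exact h4

/-- Every element of odd order in a quotient of a finite group lifts to an element of
odd order. -/
lemma odd_lift_aux {G : Type} [Group G] [Finite G] (N : Subgroup G) [N.Normal]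
    (x : G ⧸ N) (hx : Odd (orderOf x)) :
    ∃ z : G, (QuotientGroup.mk' N) z = x ∧ Odd (orderOf z) := by
  obtain ⟨g, rfl⟩ := QuotientGroup.mk'_surjective N x
  set π := QuotientGroup.mk' N with hπ
  set k := orderOf g with hk
  have hk0 : k ≠ 0 := (orderOf_pos g).ne'
  set e := k.factorization 2 with he
  set u := k / 2 ^ e with hu
  have h2e : 2 ^ e ∣ k := Nat.ordProj_dvd k 2
  have hku : k = 2 ^ e * u := (Nat.mul_div_cancel' h2e).symm
  have hu0 : u ≠ 0 := by
    intro h; rw [h, mul_zero] at hku; exact hk0 hku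
  have huodd : ¬ (2 ∣ u) := Nat.not_dvd_ordCompl Nat.prime_two hk0
  have huodd' : Odd u := Nat.odd_iff.mpr (Nat.two_dvd_ne_zero.mp huodd)
  have hcop : Nat.Coprime (2 ^ e) u := (Nat.coprime_ordCompl Nat.prime_two hk0).pow_left e
  haveI : NeZero u := ⟨hu0⟩
  set U : (ZMod u)ˣ := ZMod.unitOfCoprime (2 ^ e) hcop with hU
  set s : ℕ := ((U⁻¹ : (ZMod u)ˣ) : ZMod u).val with hs
  have hmodu : 2 ^ e * s ≡ 1 [MOD u] := by
    have : ((2 ^ e * s : ℕ) : ZMod u) = ((1 : ℕ) : ZMod u) := by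
      push_cast
      rw [show ((s : ZMod u)) = ((U⁻¹ : (ZMod u)ˣ) : ZMod u) by
        rw [hs, ZMod.natCast_val, ZMod.cast_id]]
      rw [show ((2 : ZMod u) ^ e) = (U : ZMod u) by rw [hU, ZMod.coe_unitOfCoprime]; push_cast; ring]
      rw [← Units.val_mul, mul_inv_cancel, Units.val_one]
    exact (ZMod.natCast_eq_natCast_iff _ _ _).mp this
  have hnk : orderOf (π g) ∣ k := orderOf_map_dvd π g
  have hn2 : Nat.Coprime (orderOf (π g)) (2 ^ e) :=
    Nat.Coprime.pow_right e hx.coprime_two_right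
  have hnu : orderOf (π g) ∣ u := by
    refine (Nat.Coprime.dvd_of_dvd_mul_left hn2 ?_)
    rw [← hku]; exact hnk
  refine ⟨g ^ (2 ^ e * s), ?_, ?_⟩
  · rw [map_pow]
    have : 2 ^ e * s ≡ 1 [MOD orderOf (π g)] := Nat.ModEq.of_dvd hnu hmodu
    calc (π g) ^ (2 ^ e * s) = (π g) ^ 1 := pow_eq_pow_iff_modEq.mpr this
    _ = π g := pow_one _
  · rw [pow_mul]
    have h1 : orderOf (g ^ 2 ^ e) = u := by
      rw [orderOf_pow, ← hk, Nat.gcd_eq_right h2e]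
    have h2 : orderOf ((g ^ 2 ^ e) ^ s) ∣ u := by
      rw [orderOf_pow, h1]
      exact Nat.div_dvd_of_dvd (Nat.gcd_dvd_left _ _)
    exact huodd'.of_dvd_nat h2

/-- The properties of being a rational group and of having all
elements of the same odd order conjugate are inherited by quotients. -/
theorem rational_oddC_quotient (G : Type) [Group G] [Finite G]
    (hrat : ∀ (g : G) (m : ℤ), Int.gcd m (orderOf g) = 1 → IsConj (g ^ m) g)
    (hodd : ∀ x y : G, Odd (orderOf x) → orderOf x = orderOf y → IsConj x y)
    (N : Subgroup G) (hN : N.Normal) :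
    (∀ (g : G ⧸ N) (m : ℤ), Int.gcd m (orderOf g) = 1 → IsConj (g ^ m) g) ∧
    (∀ x y : G ⧸ N, Odd (orderOf x) → orderOf x = orderOf y → IsConj x y) := by
  haveI := hN
  set π := QuotientGroup.mk' N with hπ
  -- Part 1: rationality of the quotient
  have hrat' : ∀ (x : G ⧸ N) (m : ℤ), Int.gcd m (orderOf x) = 1 → IsConj (x ^ m) x := by
    intro x m hm
    obtain ⟨g, rfl⟩ := QuotientGroup.mk'_surjective N x
    have hk0 : orderOf g ≠ 0 := (orderOf_pos g).ne'
    have hdvd : orderOf (π g) ∣ orderOf g := orderOf_map_dvd π g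
    obtain ⟨m', hco, hmod⟩ := coprime_lift_aux (orderOf g) (orderOf (π g)) hdvd hk0 m hm
    have h1 : IsConj (g ^ (m' : ℤ)) g := by
      refine hrat g (m' : ℤ) ?_
      simpa [Int.gcd_natCast_natCast] using hco
    have h2 : IsConj (π g ^ (m' : ℤ)) (π g) := by
      have := π.map_isConj h1
      rwa [map_zpow] at this
    have h3 : (π g) ^ (m' : ℤ) = (π g) ^ m := zpow_eq_zpow_iff_modEq.mpr hmod
    rwa [h3] at h2
  refine ⟨hrat', ?_⟩
  -- Part 2: OddC of the quotient
  intro x y hxodd hord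
  obtain ⟨z, hz, hzodd⟩ := odd_lift_aux N x hxodd
  obtain ⟨w, hw, hwodd⟩ := odd_lift_aux N y (hord ▸ hxodd)
  set u := orderOf z with hu
  set v := orderOf w with hv
  set d := Nat.gcd u v with hd
  have hu0 : u ≠ 0 := (orderOf_pos z).ne'
  have hv0 : v ≠ 0 := (orderOf_pos w).ne'
  have hd0 : d ≠ 0 := by
    simp [hd, Nat.gcd_eq_zero_iff, hu0]
  have hdu : d ∣ u := Nat.gcd_dvd_left _ _
  have hdv : d ∣ v := Nat.gcd_dvd_right _ _
  have hzd : orderOf (z ^ (u / d)) = d := by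
    rw [orderOf_pow, ← hu, Nat.gcd_eq_right (Nat.div_dvd_of_dvd hdu),
      Nat.div_div_self hdu hu0]
  have hwd : orderOf (w ^ (v / d)) = d := by
    rw [orderOf_pow, ← hv, Nat.gcd_eq_right (Nat.div_dvd_of_dvd hdv),
      Nat.div_div_self hdv hv0]
  have hdodd : Odd d := hzodd.of_dvd_nat hdu
  have hconj : IsConj (z ^ (u / d)) (w ^ (v / d)) :=
    hodd _ _ (by rw [hzd]; exact hdodd) (hzd.trans hwd.symm)
  have hq : IsConj (x ^ (u / d)) (y ^ (v / d)) := by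
    have := π.map_isConj hconj
    rwa [map_pow, map_pow, hz, hw] at this
  -- conjugate elements have equal orders
  obtain ⟨c, hc⟩ := hq
  have hqord : orderOf (x ^ (u / d)) = orderOf (y ^ (v / d)) := hc.orderOf_eq
  set n := orderOf x with hn
  have hn0 : n ≠ 0 := (orderOf_pos x).ne'
  set α := u / d with hα
  set β := v / d with hβ
  have hαβ : Nat.Coprime α β := Nat.coprime_div_gcd_div_gcd (Nat.pos_of_ne_zero hd0)
  have horders : n / Nat.gcd n α = n / Nat.gcd n β := by
    have h1 : orderOf (x ^ α) = n / Nat.gcd n α := by rw [orderOf_pow, hn]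
    have h2 : orderOf (y ^ β) = n / Nat.gcd n β := by rw [orderOf_pow, ← hord, hn]
    rw [← h1, ← h2]; exact hqord
  have hgcdeq : Nat.gcd n α = Nat.gcd n β := by
    have e1 : n / (n / Nat.gcd n α) = Nat.gcd n α :=
      Nat.div_div_self (Nat.gcd_dvd_left _ _) hn0
    have e2 : n / (n / Nat.gcd n β) = Nat.gcd n β :=
      Nat.div_div_self (Nat.gcd_dvd_left _ _) hn0
    rw [← e1, ← e2, horders]
  have hone : Nat.gcd n α = 1 := by
    have h1 : Nat.gcd n α ∣ α := Nat.gcd_dvd_right _ _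
    have h2 : Nat.gcd n α ∣ β := hgcdeq ▸ Nat.gcd_dvd_right n β
    exact Nat.eq_one_of_dvd_coprimes hαβ h1 h2
  have hone' : Nat.gcd n β = 1 := hgcdeq ▸ hone
  have hx1 : IsConj (x ^ α) x := by
    have := hrat' x (α : ℤ) (by simpa [Int.gcd_natCast_natCast, Nat.Coprime, Nat.gcd_comm] using hone)
    rwa [zpow_natCast] at this
  have hy1 : IsConj (y ^ β) y := by
    have := hrat' y (β : ℤ) (by
      rw [← hord]
      simpa [Int.gcd_natCast_natCast, Nat.Coprime, Nat.gcd_comm] using hone')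
    rwa [zpow_natCast] at this
  exact (hx1.symm.trans ⟨c, hc⟩).trans hy1
end

section
/- Let G be a finite group in which any two elements of the same odd order are conjugate, and let N be a minimal normal subgroup of G which is not abelian. Then N is a (nonabelian) simple group. -/
namespace OddCAux

variable {G : Type} [Group G]

/-- The conjugate subgroup `g M g⁻¹`. -/
def cnj (g : G) (M : Subgroup G) : Subgroup G where
  carrier := {x | g⁻¹ * x * g ∈ M}
  one_mem' := by simpa using M.one_mem
  mul_mem' := by
    intro a b ha hb
    show g⁻¹ * (a * b) * g ∈ M
    have h : g⁻¹ * (a * b) * g = (g⁻¹ * a * g) * (g⁻¹ * b * g) := by group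
    rw [h]; exact M.mul_mem ha hb
  inv_mem' := by
    intro a ha
    show g⁻¹ * a⁻¹ * g ∈ M
    have h : g⁻¹ * a⁻¹ * g = (g⁻¹ * a * g)⁻¹ := by group
    rw [h]; exact M.inv_mem ha

theorem mem_cnj {g x : G} {M : Subgroup G} : x ∈ cnj g M ↔ g⁻¹ * x * g ∈ M := Iff.rfl

theorem conj_mem_cnj {g x : G} {M : Subgroup G} (hx : x ∈ M) : g * x * g⁻¹ ∈ cnj g M := by
  rw [mem_cnj]
  have h : g⁻¹ * (g * x * g⁻¹) * g = x := by group
  rw [h]; exact hx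

theorem cnj_cnj (e f : G) (M : Subgroup G) : cnj e (cnj f M) = cnj (e * f) M := by
  ext x
  rw [mem_cnj, mem_cnj, mem_cnj]
  constructor <;> intro h
  · have h2 : (e * f)⁻¹ * x * (e * f) = f⁻¹ * (e⁻¹ * x * e) * f := by group
    rw [h2]; exact h
  · have h2 : f⁻¹ * (e⁻¹ * x * e) * f = (e * f)⁻¹ * x * (e * f) := by group
    rw [h2]; exact h

theorem card_cnj (g : G) (M : Subgroup G) : Nat.card (cnj g M) = Nat.card M := by
  apply Nat.card_congr
  refine ⟨fun x => ⟨g⁻¹ * ↑x * g, x.2⟩, fun m => ⟨g * ↑m * g⁻¹, conj_mem_cnj m.2⟩, ?_, ?_⟩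
  · intro x; apply Subtype.ext; show g * (g⁻¹ * ↑x * g) * g⁻¹ = ↑x; group
  · intro m; apply Subtype.ext; show g⁻¹ * (g * ↑m * g⁻¹) * g = ↑m; group

theorem conj_pow_eq (g z : G) (n : ℕ) : (g * z * g⁻¹) ^ n = g * z ^ n * g⁻¹ := by
  induction n with
  | zero => group
  | succ k ih => rw [pow_succ, pow_succ, ih]; group

end OddCAux

open OddCAux in
/-- **Claim 2 in the proof of Theorem B.** If `G` is a finite group in
which elements of the same odd order are conjugate, then every non-abelian minimal
normal subgroup of `G` is simple. -/
theorem nonabelian_minimal_normal_is_simple (G : Type) [Group G] [Finite G]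
    (hodd : ∀ x y : G, Odd (orderOf x) → orderOf x = orderOf y → IsConj x y)
    (N : Subgroup G) (hN : N.Normal) (hNne : N ≠ ⊥)
    (hmin : ∀ M : Subgroup G, M.Normal → M < N → M = ⊥)
    (hnonab : ¬ ∀ a b : N, a * b = b * a) :
    IsSimpleGroup N := by
  classical
  haveI hNT : Nontrivial ↥N := (Subgroup.nontrivial_iff_ne_bot N).mpr hNne
  constructor
  intro K hK
  by_contra hcon
  push_neg at hcon
  obtain ⟨hKbot, hKtop⟩ := hcon
  -- push K into G
  have hK'le : K.map N.subtype ≤ N := Subgroup.map_subtype_le K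
  set K' : Subgroup G := K.map N.subtype with hK'def
  have hK'ne : K' ≠ ⊥ := by
    intro h
    apply hKbot
    rw [hK'def] at h
    exact (Subgroup.map_eq_bot_iff_of_injective K (f := N.subtype) N.subtype_injective).mp h
  have hK'ltN : K' < N := by
    refine lt_of_le_of_ne hK'le ?_
    intro h
    apply hKtop
    apply Subgroup.map_injective N.subtype_injective (f := N.subtype)
    have htop : Subgroup.map N.subtype ⊤ = N := by
      rw [← MonoidHom.range_eq_map, Subgroup.subtype_range]
    rw [htop, ← hK'def]
    exact h
  have hK'norm : ∀ n ∈ N, ∀ x ∈ K', n * x * n⁻¹ ∈ K' := by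
    intro n hn x hx
    rw [hK'def, Subgroup.mem_map] at hx ⊢
    obtain ⟨k, hk, rfl⟩ := hx
    exact ⟨(⟨n, hn⟩ : ↥N) * k * (⟨n, hn⟩ : ↥N)⁻¹, hK.conj_mem k hk ⟨n, hn⟩, rfl⟩
  -- pick a minimal subgroup of K' which is normal in N
  haveI : WellFoundedLT (Subgroup G) := Finite.to_wellFoundedLT
  obtain ⟨M, hMP, hMmin0⟩ := wellFounded_lt.has_min
      {A : Subgroup G | A ≠ ⊥ ∧ A ≤ K' ∧ ∀ n ∈ N, ∀ a ∈ A, n * a * n⁻¹ ∈ A}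
      ⟨K', hK'ne, le_refl _, hK'norm⟩
  obtain ⟨hMbot, hMK', hMnorm⟩ := hMP
  have hMN : M ≤ N := le_trans hMK' hK'le
  have hMmin : ∀ A : Subgroup G, A ≤ M → A ≠ ⊥ →
      (∀ n ∈ N, ∀ a ∈ A, n * a * n⁻¹ ∈ A) → A = M := by
    intro A hle hne hnorm
    by_contra hne2
    exact hMmin0 A ⟨hne, le_trans hle hMK', hnorm⟩ (lt_of_le_of_ne hle hne2)
  -- conjugates of M : contained in N and normal in N
  have hcN : ∀ g : G, cnj g M ≤ N := by
    intro g x hx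
    rw [mem_cnj] at hx
    have h1 : g⁻¹ * x * g ∈ N := hMN hx
    have h2 : g * (g⁻¹ * x * g) * g⁻¹ = x := by group
    rw [← h2]; exact hN.conj_mem _ h1 g
  have hcnorm : ∀ g : G, ∀ n ∈ N, ∀ a ∈ cnj g M, n * a * n⁻¹ ∈ cnj g M := by
    intro g n hn a ha
    rw [mem_cnj] at ha ⊢
    have hn' : g⁻¹ * n * g ∈ N := by
      have := hN.conj_mem n hn g⁻¹
      rwa [inv_inv] at this
    have key : g⁻¹ * (n * a * n⁻¹) * g
        = (g⁻¹ * n * g) * (g⁻¹ * a * g) * (g⁻¹ * n * g)⁻¹ := by group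
    rw [key]; exact hMnorm _ hn' _ ha
  -- distinct conjugates intersect trivially
  have hL1 : ∀ g : G, cnj g M ≠ M → M ⊓ cnj g M = ⊥ := by
    intro g hne
    by_contra hI
    have hIeq : M ⊓ cnj g M = M := by
      apply hMmin _ inf_le_left hI
      intro n hn a ha
      rw [Subgroup.mem_inf] at ha ⊢
      exact ⟨hMnorm n hn a ha.1, hcnorm g n hn a ha.2⟩
    have hsub : M ≤ cnj g M := le_trans (le_of_eq hIeq.symm) inf_le_right
    have hsub2 : cnj g⁻¹ M ≤ M := by
      intro x hx
      rw [mem_cnj, inv_inv] at hx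
      have h1 := hsub hx
      rw [mem_cnj] at h1
      have h2 : g⁻¹ * (g * x * g⁻¹) * g = x := by group
      rwa [h2] at h1
    have heq2 : cnj g⁻¹ M = M :=
      Subgroup.eq_of_le_of_card_ge hsub2 (le_of_eq (card_cnj g⁻¹ M).symm)
    have hiff : ∀ m : G, m ∈ M ↔ g * m * g⁻¹ ∈ M := by
      intro m
      conv_lhs => rw [← heq2]
      rw [mem_cnj, inv_inv]
    apply hne
    ext x
    rw [mem_cnj]
    constructor
    · intro hx
      have h1 := (hiff _).mp hx
      have h2 : g * (g⁻¹ * x * g) * g⁻¹ = x := by group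
      rwa [h2] at h1
    · intro hx
      apply (hiff (g⁻¹ * x * g)).mpr
      have h2 : g * (g⁻¹ * x * g) * g⁻¹ = x := by group
      rwa [h2]
  -- elements of distinct conjugates commute
  have hL2 : ∀ g : G, cnj g M ≠ M → ∀ a ∈ M, ∀ b ∈ cnj g M, a * b = b * a := by
    intro g hne a ha b hb
    have hc1 : a * b * a⁻¹ * b⁻¹ ∈ cnj g M :=
      Subgroup.mul_mem _ (hcnorm g a (hMN ha) b hb) (Subgroup.inv_mem _ hb)
    have hc2 : a * b * a⁻¹ * b⁻¹ ∈ M := by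
      have h1 : b * a⁻¹ * b⁻¹ ∈ M := hMnorm b (hcN g hb) a⁻¹ (M.inv_mem ha)
      have h2 : a * (b * a⁻¹ * b⁻¹) = a * b * a⁻¹ * b⁻¹ := by group
      rw [← h2]; exact M.mul_mem ha h1
    have hmem : a * b * a⁻¹ * b⁻¹ ∈ M ⊓ cnj g M := Subgroup.mem_inf.mpr ⟨hc2, hc1⟩
    rw [hL1 g hne, Subgroup.mem_bot] at hmem
    have h3 : a * b = (a * b * a⁻¹ * b⁻¹) * (b * a) := by group
    rw [h3, hmem, one_mul]
  by_cases hab : ∀ a ∈ M, ∀ b ∈ M, a * b = b * a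
  · -- abelian case : N would be abelian, contradiction
    exfalso
    apply hnonab
    haveI := hN
    have hNC : Subgroup.normalClosure ((M : Set G)) = N := by
      have hle : Subgroup.normalClosure (M : Set G) ≤ N :=
        Subgroup.normalClosure_le_normal fun x hx => hMN hx
      rcases lt_or_eq_of_le hle with h | h
      · exfalso
        have hb := hmin _ Subgroup.normalClosure_normal h
        apply hMbot
        rw [eq_bot_iff, ← hb]
        exact Subgroup.le_normalClosure
      · exact h
    have hcancel : ∀ c u v : G,
        (c⁻¹ * u * c) * (c⁻¹ * v * c) = (c⁻¹ * v * c) * (c⁻¹ * u * c) → u * v = v * u := by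
      intro c u v h
      have h1 : u * v = c * ((c⁻¹ * u * c) * (c⁻¹ * v * c)) * c⁻¹ := by group
      have h2 : v * u = c * ((c⁻¹ * v * c) * (c⁻¹ * u * c)) * c⁻¹ := by group
      rw [h1, h2, h]
    have habconj : ∀ c d : G, ∀ u ∈ cnj c M, ∀ v ∈ cnj d M, u * v = v * u := by
      intro c d u hu v hv
      by_cases hcd : cnj c M = cnj d M
      · rw [← hcd] at hv
        rw [mem_cnj] at hu hv
        exact hcancel c u v (hab _ hu _ hv)
      · have hne' : cnj (c⁻¹ * d) M ≠ M := by
          intro h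
          apply hcd
          have h2 := congrArg (cnj c) h
          rw [cnj_cnj] at h2
          have he : c * (c⁻¹ * d) = d := by group
          rw [he] at h2
          exact h2.symm
        have hu' : c⁻¹ * u * c ∈ M := mem_cnj.mp hu
        have hv' : c⁻¹ * v * c ∈ cnj (c⁻¹ * d) M := by
          rw [mem_cnj]
          have h : (c⁻¹ * d)⁻¹ * (c⁻¹ * v * c) * (c⁻¹ * d) = d⁻¹ * v * d := by group
          rw [h]; exact mem_cnj.mp hv
        exact hcancel c u v (hL2 _ hne' _ hu' _ hv')
    have hpair : ∀ u ∈ Group.conjugatesOfSet (M : Set G),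
        ∀ v ∈ Group.conjugatesOfSet (M : Set G), u * v = v * u := by
      intro u hu v hv
      obtain ⟨a, ha, hconja⟩ := Group.mem_conjugatesOfSet_iff.mp hu
      obtain ⟨b, hb, hconjb⟩ := Group.mem_conjugatesOfSet_iff.mp hv
      obtain ⟨c, hc⟩ := isConj_iff.mp hconja
      obtain ⟨d, hd⟩ := isConj_iff.mp hconjb
      have huc : u ∈ cnj c M := by rw [← hc]; exact conj_mem_cnj ha
      have hvd : v ∈ cnj d M := by rw [← hd]; exact conj_mem_cnj hb
      exact habconj c d u huc v hvd
    have h1 : ∀ u ∈ Group.conjugatesOfSet (M : Set G),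
        Subgroup.closure (Group.conjugatesOfSet (M : Set G)) ≤ Subgroup.centralizer {u} := by
      intro u hu
      apply (Subgroup.closure_le _).mpr
      intro v hv
      exact Subgroup.mem_centralizer_iff.mpr fun w hw => by
        rw [Set.mem_singleton_iff] at hw
        rw [hw]
        exact hpair u hu v hv
    have h2 : ∀ x ∈ Subgroup.closure (Group.conjugatesOfSet (M : Set G)),
        ∀ y ∈ Subgroup.closure (Group.conjugatesOfSet (M : Set G)), x * y = y * x := by
      intro x hx y hy
      have hsx : Subgroup.closure (Group.conjugatesOfSet (M : Set G))
          ≤ Subgroup.centralizer {x} := by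
        apply (Subgroup.closure_le _).mpr
        intro v hv
        exact Subgroup.mem_centralizer_iff.mpr fun w hw => by
          rw [Set.mem_singleton_iff] at hw
          rw [hw]
          exact (Subgroup.mem_centralizer_iff.mp (h1 v hv hx) v (Set.mem_singleton v)).symm
      exact Subgroup.mem_centralizer_iff.mp (hsx hy) x (Set.mem_singleton x)
    have hNclos : Subgroup.closure (Group.conjugatesOfSet (M : Set G)) = N := hNC
    intro a b
    apply Subtype.ext
    show (a : G) * (b : G) = (b : G) * (a : G)
    have haN : (a : G) ∈ Subgroup.closure (Group.conjugatesOfSet (M : Set G)) := by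
      rw [hNclos]; exact a.2
    have hbN : (b : G) ∈ Subgroup.closure (Group.conjugatesOfSet (M : Set G)) := by
      rw [hNclos]; exact b.2
    exact h2 _ haN _ hbN
  · -- non-abelian case
    -- elements of M centralizing M are trivial
    have hZ : ∀ x ∈ M, (∀ z ∈ M, x * z = z * x) → x = 1 := by
      intro x hx hxz
      by_contra hx1
      have hZeq : M ⊓ Subgroup.centralizer (M : Set G) = M := by
        apply hMmin _ inf_le_left
        · intro h
          have hxZ : x ∈ M ⊓ Subgroup.centralizer (M : Set G) :=
            Subgroup.mem_inf.mpr ⟨hx,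
              Subgroup.mem_centralizer_iff.mpr fun m hm => (hxz m hm).symm⟩
          rw [h, Subgroup.mem_bot] at hxZ
          exact hx1 hxZ
        · intro n hn z hz
          obtain ⟨hz1, hz2⟩ := Subgroup.mem_inf.mp hz
          refine Subgroup.mem_inf.mpr ⟨hMnorm n hn z hz1,
            Subgroup.mem_centralizer_iff.mpr ?_⟩
          intro m hm
          have hw : n⁻¹ * m * n ∈ M := by
            have := hMnorm n⁻¹ (N.inv_mem hn) m hm
            rwa [inv_inv] at this
          have hzw := Subgroup.mem_centralizer_iff.mp hz2 _ hw
          calc m * (n * z * n⁻¹) = n * ((n⁻¹ * m * n) * z) * n⁻¹ := by group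
            _ = n * (z * (n⁻¹ * m * n)) * n⁻¹ := by rw [hzw]
            _ = (n * z * n⁻¹) * m := by group
      apply hab
      intro a ha b hb
      have haZ : a ∈ M ⊓ Subgroup.centralizer (M : Set G) := by rw [hZeq]; exact ha
      exact (Subgroup.mem_centralizer_iff.mp (Subgroup.mem_inf.mp haZ).2 b hb).symm
    -- an element of odd prime order in M
    haveI : Nontrivial ↥M := (Subgroup.nontrivial_iff_ne_bot M).mpr hMbot
    have hoddel : ∃ p : ℕ, p.Prime ∧ Odd p ∧ ∃ x : G, x ∈ M ∧ orderOf x = p := by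
      by_cases hdvd : ∃ p : ℕ, p.Prime ∧ Odd p ∧ p ∣ Nat.card ↥M
      · obtain ⟨p, hp, hpodd, hpdvd⟩ := hdvd
        haveI : Fact p.Prime := ⟨hp⟩
        obtain ⟨x, hx⟩ := exists_prime_orderOf_dvd_card' p hpdvd
        refine ⟨p, hp, hpodd, ↑x, x.2, ?_⟩
        rw [← hx]
        exact orderOf_injective M.subtype M.subtype_injective x
      · exfalso
        push_neg at hdvd
        have h2 : ∀ {q : ℕ}, q.Prime → q ∣ Nat.card ↥M → q = 2 := by
          intro q hq hqd
          by_contra hq2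
          exact hdvd q hq (hq.odd_of_ne_two hq2) hqd
        have hcard0 : Nat.card ↥M ≠ 0 := Nat.card_pos.ne'
        have hn := Nat.eq_prime_pow_of_unique_prime_dvd hcard0 h2
        haveI : Fact (Nat.Prime 2) := ⟨Nat.prime_two⟩
        have hpg : IsPGroup 2 ↥M := IsPGroup.iff_card.mpr ⟨_, hn⟩
        haveI := hpg.center_nontrivial
        obtain ⟨z, hz1⟩ := exists_ne (1 : Subgroup.center ↥M)
        have hzc : ∀ m ∈ M, ((z : ↥M) : G) * m = m * ((z : ↥M) : G) := by
          intro m hm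
          have hcz := Subgroup.mem_center_iff.mp z.2 ⟨m, hm⟩
          exact (congrArg (fun w : ↥M => (w : G)) hcz).symm
        have hz0 := hZ _ (z : ↥M).2 hzc
        exact hz1 (Subtype.ext (Subtype.ext hz0))
    obtain ⟨p, hp, hpodd, x, hxM, hxord⟩ := hoddel
    haveI : Fact p.Prime := ⟨hp⟩
    -- a conjugate of M distinct from M
    have hex : ∃ e : G, cnj e M ≠ M := by
      by_contra he
      push_neg at he
      have hMnormal : M.Normal := by
        constructor
        intro m hm g
        have := conj_mem_cnj (g := g) hm
        rwa [he g] at this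
      exact hMbot (hmin M hMnormal (lt_of_le_of_lt hMK' hK'ltN))
    obtain ⟨e, hne⟩ := hex
    have hbc : e * x * e⁻¹ ∈ cnj e M := conj_mem_cnj hxM
    have hxp : x ^ p = 1 := by rw [← hxord]; exact pow_orderOf_eq_one x
    have hbp : (e * x * e⁻¹) ^ p = 1 := by rw [conj_pow_eq, hxp]; group
    have hbne : e * x * e⁻¹ ≠ 1 := by
      intro h
      have hx1 : x = 1 := by
        have h2 : x = e⁻¹ * (e * x * e⁻¹) * e := by group
        rw [h2, h]; group
      rw [hx1, orderOf_one] at hxord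
      exact hp.one_lt.ne' hxord.symm
    have hbord : orderOf (e * x * e⁻¹) = p := orderOf_eq_prime hbp hbne
    have hcomm : x * (e * x * e⁻¹) = (e * x * e⁻¹) * x := hL2 e hne x hxM _ hbc
    have hyne : x * (e * x * e⁻¹) ≠ 1 := by
      intro h
      have hxb : x = (e * x * e⁻¹)⁻¹ := mul_eq_one_iff_eq_inv.mp h
      have hbM : e * x * e⁻¹ ∈ M := by
        rw [eq_inv_of_mul_eq_one_right h]
        exact M.inv_mem hxM
      have hmem : e * x * e⁻¹ ∈ M ⊓ cnj e M := Subgroup.mem_inf.mpr ⟨hbM, hbc⟩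
      rw [hL1 e hne, Subgroup.mem_bot] at hmem
      exact hbne hmem
    have hypow : (x * (e * x * e⁻¹)) ^ p = 1 := by
      have hcomm' : Commute x (e * x * e⁻¹) := hcomm
      rw [hcomm'.mul_pow, hxp, hbp, one_mul]
    have hyord : orderOf (x * (e * x * e⁻¹)) = p := orderOf_eq_prime hypow hyne
    have hconj : IsConj x (x * (e * x * e⁻¹)) :=
      hodd _ _ (by rw [hxord]; exact hpodd) (by rw [hxord, hyord])
    obtain ⟨h, hh⟩ := isConj_iff.mp hconj
    have hyc : x * (e * x * e⁻¹) ∈ cnj h M := by rw [← hh]; exact conj_mem_cnj hxM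
    by_cases hc1 : cnj h M = M
    · rw [hc1] at hyc
      have hbM : e * x * e⁻¹ ∈ M := by
        have h1 : x⁻¹ * (x * (e * x * e⁻¹)) ∈ M := M.mul_mem (M.inv_mem hxM) hyc
        rwa [inv_mul_cancel_left] at h1
      have hmem : e * x * e⁻¹ ∈ M ⊓ cnj e M := Subgroup.mem_inf.mpr ⟨hbM, hbc⟩
      rw [hL1 e hne, Subgroup.mem_bot] at hmem
      exact hbne hmem
    · by_cases hc2 : cnj h M = cnj e M
      · rw [hc2] at hyc
        have hxc : x ∈ cnj e M := by
          have h1 : (x * (e * x * e⁻¹)) * (e * x * e⁻¹)⁻¹ ∈ cnj e M :=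
            Subgroup.mul_mem _ hyc (Subgroup.inv_mem _ hbc)
          rwa [mul_inv_cancel_right] at h1
        have hmem : x ∈ M ⊓ cnj e M := Subgroup.mem_inf.mpr ⟨hxM, hxc⟩
        rw [hL1 e hne, Subgroup.mem_bot] at hmem
        rw [hmem, orderOf_one] at hxord
        exact hp.one_lt.ne' hxord.symm
      · have hxcen : ∀ z ∈ M, x * z = z * x := by
          intro z hz
          have hyz : z * (x * (e * x * e⁻¹)) = (x * (e * x * e⁻¹)) * z :=
            hL2 h hc1 z hz _ hyc
          have hbz : z * (e * x * e⁻¹) = (e * x * e⁻¹) * z := hL2 e hne z hz _ hbc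
          have e2 : x * z * (e * x * e⁻¹) = z * x * (e * x * e⁻¹) := by
            calc x * z * (e * x * e⁻¹) = x * (z * (e * x * e⁻¹)) := by rw [mul_assoc]
              _ = x * ((e * x * e⁻¹) * z) := by rw [hbz]
              _ = (x * (e * x * e⁻¹)) * z := by rw [← mul_assoc]
              _ = z * (x * (e * x * e⁻¹)) := hyz.symm
              _ = z * x * (e * x * e⁻¹) := by rw [← mul_assoc]
          exact mul_right_cancel e2
        have hx1 := hZ x hxM hxcen
        rw [hx1, orderOf_one] at hxord
        exact hp.one_lt.ne' hxord.symm
end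

section
/- Let G be a finite group in which any two elements of the same odd order are conjugate, let q be an odd prime, and let N be a nontrivial normal elementary abelian q-subgroup of G. Then N \ {1} is a single conjugacy class of G; in particular |N| - 1 divides |G|. -/
/-- If `G` is a finite group in which elements of the same odd
order are conjugate, `q` is an odd prime, and `N` is a nontrivial normal elementary
abelian `q`-subgroup of `G`, then `N \ {1}` is a single `G`-conjugacy class; in
particular `|N| - 1` divides `|G|`. -/
theorem elementary_abelian_normal_single_class (G : Type) [Group G] [Finite G]
    (hodd : ∀ x y : G, Odd (orderOf x) → orderOf x = orderOf y → IsConj x y)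
    (q : ℕ) (hq : q.Prime) (hqodd : Odd q)
    (N : Subgroup G) (hN : N.Normal) (hNne : N ≠ ⊥)
    (hab : ∀ a b : N, a * b = b * a)
    (helem : ∀ x : G, x ∈ N → x ≠ 1 → orderOf x = q) :
    (∀ x y : G, x ∈ N → x ≠ 1 → y ∈ N → y ≠ 1 → IsConj x y) ∧
      (Nat.card N - 1) ∣ Nat.card G := by
  have hconj : ∀ x y : G, x ∈ N → x ≠ 1 → y ∈ N → y ≠ 1 → IsConj x y := by
    intro x y hx hx1 hy hy1
    exact hodd x y (by rw [helem x hx hx1]; exact hqodd)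
      (by rw [helem x hx hx1, helem y hy hy1])
  refine ⟨hconj, ?_⟩
  obtain ⟨x, hx, hx1⟩ : ∃ x ∈ N, x ≠ (1 : G) := by
    by_contra h
    push_neg at h
    exact hNne (Subgroup.eq_bot_iff_forall N |>.2 h)
  have horb : MulAction.orbit (ConjAct G) x = (N : Set G) \ {1} := by
    ext y
    rw [ConjAct.mem_orbit_conjAct]
    constructor
    · intro h
      obtain ⟨c, hc⟩ := h
      -- hc : ↑c * y = x * ↑c, so y = c⁻¹ * x * c
      have hyx : y = (c : G)⁻¹ * x * c := by
        have h := hc.eq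
        rw [mul_assoc, ← h]
        simp
      have hyN : y ∈ N := by
        rw [hyx]
        have := hN.conj_mem x hx (c : G)⁻¹
        simpa using this
      refine ⟨hyN, ?_⟩
      simp only [Set.mem_singleton_iff]
      intro hy1
      apply hx1
      rw [hy1] at hyx
      have h2 : (c : G) * ((c : G)⁻¹ * x * c) * (c : G)⁻¹ = (c : G) * 1 * (c : G)⁻¹ := by
        rw [← hyx]
      simpa [mul_assoc] using h2
    · rintro ⟨hyN, hy1⟩
      exact (hconj x y hx hx1 hyN hy1).symm
  have hcard : Nat.card (MulAction.orbit (ConjAct G) x) = Nat.card N - 1 := by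
    rw [horb, Nat.card_coe_set_eq]
    have h1 : ((N : Set G) \ {1}).ncard = (N : Set G).ncard - ({1} : Set G).ncard := by
      apply Set.ncard_diff
      · simpa using N.one_mem
      · exact Set.toFinite _
    rw [h1, Set.ncard_singleton, ← Nat.card_coe_set_eq]
    rfl
  have key : Nat.card (MulAction.orbit (ConjAct G) x) *
      Nat.card (MulAction.stabilizer (ConjAct G) x) = Nat.card (ConjAct G) := by
    rw [← Nat.card_prod]
    exact Nat.card_congr (MulAction.orbitProdStabilizerEquivGroup (ConjAct G) x)
  have hG : Nat.card (ConjAct G) = Nat.card G := rfl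
  exact ⟨Nat.card (MulAction.stabilizer (ConjAct G) x), by rw [← hG, ← key, hcard]⟩
end
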